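/- arXiv:1201.4397 — 6 statements merged into one kernel-verified Lean document; each statement's English description precedes it below -/
import Mathlib

section
/- In a Weyl group $W$ with twisted involutions $\mathcal{I} = \{w \in W : \theta(w)^{-1} = w\}$ (for an involutive automorphism $\theta$ of $W$) and with the monoid action defined by $m(s) * a = a$ if $\ell(sa) < \ell(a)$; $m(s)*a = sa$ if $\ell(sa) > \ell(a)$ and $s a \theta(s)^{-1} = a$; and $m(s)*a = s a \theta(s)^{-1}$ otherwise: for any simple reflection $s$, there cannot exist three distinct twisted involutions $a_1, a_2, b$ with $m(s)*a_1 = b \ne a_1$ and $m(s)*a_2 = b \ne a_2$. -/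
open CoxeterSystem Classical

variable {B : Type*} {W : Type*} [Group W] {M : CoxeterMatrix B}

/-- The Richardson–Springer monoid action of a simple reflection `s` on twisted
involutions: `m(s) * a = a` if `ℓ(sa) < ℓ(a)`; `= sa` if `ℓ(sa) > ℓ(a)` and
`s a θ(s)⁻¹ = a`; and `= s a θ(s)⁻¹` otherwise. -/
noncomputable def mAct (cs : CoxeterSystem M W) (θ : W →* W) (s a : W) : W :=
  if cs.length (s * a) < cs.length a then a
  else if s * a * (θ s)⁻¹ = a then s * a
  else s * a * (θ s)⁻¹

/-- In a Coxeter system with an involutive automorphism `θ` preserving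
the simple reflections, for any simple reflection `s` there cannot be three
distinct twisted involutions `a₁, a₂, b` with `m(s) * a₁ = b ≠ a₁` and
`m(s) * a₂ = b ≠ a₂`. -/
theorem stmt2 (cs : CoxeterSystem M W) (θ : W →* W)
    (hθ2 : ∀ w, θ (θ w) = w) (hθs : ∀ i : B, ∃ j : B, θ (cs.simple i) = cs.simple j)
    (i : B) (a₁ a₂ b : W)
    (ha₁ : θ a₁ = a₁⁻¹) (ha₂ : θ a₂ = a₂⁻¹) (hb : θ b = b⁻¹)
    (h12 : a₁ ≠ a₂) (hb1 : b ≠ a₁) (hb2 : b ≠ a₂)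
    (m1 : mAct cs θ (cs.simple i) a₁ = b) (m2 : mAct cs θ (cs.simple i) a₂ = b) :
    False := by
  set s := cs.simple i with hs
  unfold mAct at m1 m2
  by_cases l1 : cs.length (s * a₁) < cs.length a₁
  · rw [if_pos l1] at m1; exact hb1 m1.symm
  rw [if_neg l1] at m1
  by_cases l2 : cs.length (s * a₂) < cs.length a₂
  · rw [if_pos l2] at m2; exact hb2 m2.symm
  rw [if_neg l2] at m2
  by_cases c1 : s * a₁ * (θ s)⁻¹ = a₁ <;> by_cases c2 : s * a₂ * (θ s)⁻¹ = a₂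
  · rw [if_pos c1] at m1; rw [if_pos c2] at m2
    exact h12 (mul_left_cancel (m1.trans m2.symm))
  · rw [if_pos c1] at m1; rw [if_neg c2] at m2
    -- b = s a₁, and s b (θ s)⁻¹ = b, so a₂ = b
    rw [m1] at c1
    apply hb2
    have : s * a₂ * (θ s)⁻¹ = s * b * (θ s)⁻¹ := by
      rw [m2, mul_assoc, c1]; exact m1.symm
    exact (mul_left_cancel (mul_right_cancel this)).symm
  · rw [if_neg c1] at m1; rw [if_pos c2] at m2
    rw [m2] at c2
    apply hb1
    have : s * a₁ * (θ s)⁻¹ = s * b * (θ s)⁻¹ := by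
      rw [m1, mul_assoc, c2]; exact m2.symm
    exact (mul_left_cancel (mul_right_cancel this)).symm
  · rw [if_neg c1] at m1; rw [if_neg c2] at m2
    exact h12 (mul_left_cancel (mul_right_cancel (m1.trans m2.symm)))
end

section
/- Let $\gamma: \mathbb{C}^{2n+1} \times \mathbb{C}^{2n+1} \to \mathbb{C}$ be the symmetric bilinear form with $\gamma(e_i, e_j) = \delta_{i, 2n+2-j}$. For every involution $b \in S_{2n+1}$ there exists an ordered basis $v_1, \ldots, v_{2n+1}$ of $\mathbb{C}^{2n+1}$ such that $\gamma(v_i, v_j) \ne 0$ if and only if $j = b(i)$ (i.e., the Gram matrix of $\gamma$ in this basis is a monomial matrix whose underlying permutation is $b$). -/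
/-- The antidiagonal symmetric bilinear form on `ℂ^{2n+1}`:
`γ(u,v) = ∑ i, u i * v (rev i)`, so that `γ(e_i, e_j) = δ_{i, rev j}`
(in 1-indexed terms, `γ(e_i,e_j) = δ_{i,2n+2-j}`). -/
noncomputable def antidiagForm (n : ℕ) (u v : Fin (2 * n + 1) → ℂ) : ℂ :=
  ∑ i : Fin (2 * n + 1), u i * v i.rev

/-! A nondegenerate symmetric form over an algebraically closed field of characteristic `≠ 2`
has an orthonormal basis `u`. Let `s * s = -1`. For each 2-cycle `{i, b i}` of `b` the vectors
`u i + s • u (b i)` and `u (b i) + s • u i` are isotropic and pair to `2 * s ≠ 0`, while a fixed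
point `i` keeps `u i`. The Gram matrix of the resulting family is monomial with permutation `b`,
so pairing a vanishing combination with each vector isolates one coefficient: the family is
linearly independent, hence a basis. -/

open Module

namespace LinearMap.BilinForm

variable {R K V ι : Type*}

theorem linearIndependent_of_apply_ne_zero_iff [Fintype ι] [CommRing R] [NoZeroDivisors R]
    [AddCommGroup V] [Module R V] {B : LinearMap.BilinForm R V} {v : ι → V} {σ : ι → ι}
    (hσ : σ.Surjective) (hv : ∀ i j, B (v i) (v j) ≠ 0 ↔ j = σ i) :
    LinearIndependent R v := by
  classical
  rw [Fintype.linearIndependent_iff]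
  intro g hg k
  obtain ⟨i, rfl⟩ := hσ k
  have hpair : B (v i) (∑ j, g j • v j) = g (σ i) * B (v i) (v (σ i)) := by
    rw [map_sum, Finset.sum_eq_single (σ i)]
    · simp
    · intro j _ hj
      rw [map_smul, smul_eq_mul, not_ne_iff.mp (mt (hv i j).mp hj), mul_zero]
    · simp
  rw [hg, map_zero, eq_comm] at hpair
  exact (mul_eq_zero.mp hpair).resolve_right ((hv i _).mpr rfl)

variable [Field K] [AddCommGroup V] [Module K V] {B : LinearMap.BilinForm K V}

theorem apply_add_smul_apply_add_smul_of_involutive [DecidableEq ι] {u : ι → V}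
    (hu : ∀ i j, B (u i) (u j) = if i = j then 1 else 0) {b : ι → ι} (hb : b.Involutive)
    {s : K} (hs : s * s = -1) (i j : ι) :
    B (u i + (if b i = i then 0 else s) • u (b i)) (u j + (if b j = j then 0 else s) • u (b j)) =
      if j = b i then (if b i = i then 1 else 2 * s) else 0 := by
  simp only [map_add, map_smul, LinearMap.add_apply, LinearMap.smul_apply, smul_eq_mul, hu,
    hb.injective.eq_iff, hb.eq_iff]
  by_cases hji : j = b i
  · subst hji
    by_cases hfix : b i = i
    · simp [hfix]
    · simp [hfix, hb i, Ne.symm hfix]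
      ring
  · by_cases hij : j = i
    · subst hij
      simp [hji]
      linear_combination hs
    · have hij' : i ≠ b j := fun h => hji (h ▸ (hb j).symm)
      simp [hji, hij', Ne.symm hij]

variable [FiniteDimensional K V] [IsAlgClosed K] [Invertible (2 : K)] [Fintype ι] [DecidableEq ι]

theorem exists_basis_apply_eq_ite (hBs : B.IsSymm) (hBn : B.Nondegenerate)
    (hι : Fintype.card ι = finrank K V) :
    ∃ u : Basis ι K V, ∀ i j, B (u i) (u j) = if i = j then 1 else 0 := by
  obtain ⟨w, hw⟩ := exists_orthogonal_basis (isSymm_iff.mp hBs)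
  have hdiag : ∀ i, B (w i) (w i) ≠ 0 := iIsOrtho.not_isOrtho_basis_self_of_nondegenerate hw hBn
  choose r hr using fun i => IsAlgClosed.exists_eq_mul_self (B (w i) (w i))
  have hr0 : ∀ i, r i ≠ 0 := fun i h => hdiag i (by simp [hr i, h])
  let e := (Fintype.equivFinOfCardEq hι).symm
  refine ⟨(w.unitsSMul fun i => (Units.mk0 (r i) (hr0 i))⁻¹).reindex e, fun i j => ?_⟩
  simp only [Basis.reindex_apply, Basis.unitsSMul_apply, Units.smul_def, map_smul,
    LinearMap.smul_apply, smul_eq_mul, Units.val_inv_eq_inv_val, Units.val_mk0]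
  split_ifs with hij
  · rw [hij, hr]
    field_simp [hr0]
  · rw [hw (e.symm.injective.ne hij), mul_zero, mul_zero]

theorem exists_basis_apply_ne_zero_iff_eq_of_involutive (hBs : B.IsSymm)
    (hBn : B.Nondegenerate) (hι : Fintype.card ι = finrank K V) {b : ι → ι}
    (hb : b.Involutive) : ∃ v : Basis ι K V, ∀ i j, B (v i) (v j) ≠ 0 ↔ j = b i := by
  obtain ⟨u, hu⟩ := exists_basis_apply_eq_ite hBs hBn hι
  obtain ⟨s, hs⟩ := IsAlgClosed.exists_eq_mul_self (-1 : K)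
  have hs0 : s ≠ 0 := by rintro rfl; simp at hs
  have h2 : (2 : K) ≠ 0 := Invertible.ne_zero 2
  let v i := u i + (if b i = i then 0 else s) • u (b i)
  have hv : ∀ i j, B (v i) (v j) ≠ 0 ↔ j = b i := by
    intro i j
    rw [apply_add_smul_apply_add_smul_of_involutive hu hb hs.symm]
    split_ifs <;> simp_all
  refine ⟨basisOfLinearIndependentOfCardEqFinrank' v
    (linearIndependent_of_apply_ne_zero_iff hb.surjective hv) hι, ?_⟩
  simpa using hv

end LinearMap.BilinForm

noncomputable def antidiagBilinForm (n : ℕ) : LinearMap.BilinForm ℂ (Fin (2 * n + 1) → ℂ) :=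
  LinearMap.mk₂ ℂ (antidiagForm n)
    (fun _ _ _ => by simp only [antidiagForm, Pi.add_apply, add_mul, Finset.sum_add_distrib])
    (fun _ _ _ => by
      simp only [antidiagForm, Pi.smul_apply, smul_eq_mul, mul_assoc, Finset.mul_sum])
    (fun _ _ _ => by simp only [antidiagForm, Pi.add_apply, mul_add, Finset.sum_add_distrib])
    (fun _ _ _ => by
      simp only [antidiagForm, Pi.smul_apply, smul_eq_mul, mul_left_comm, Finset.mul_sum])

theorem antidiagBilinForm_apply (n : ℕ) (u v : Fin (2 * n + 1) → ℂ) :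
    antidiagBilinForm n u v = antidiagForm n u v :=
  rfl

theorem antidiagBilinForm_isSymm (n : ℕ) : (antidiagBilinForm n).IsSymm := by
  refine LinearMap.BilinForm.isSymm_def.mpr fun u v => ?_
  simp only [antidiagBilinForm_apply, antidiagForm]
  rw [← Equiv.sum_comp Fin.revPerm]
  simp [mul_comm]

theorem antidiagBilinForm_nondegenerate (n : ℕ) : (antidiagBilinForm n).Nondegenerate := by
  refine (LinearMap.BilinForm.isSymm_iff.mp (antidiagBilinForm_isSymm n)).isRefl
    |>.nondegenerate_iff_separatingLeft.mpr fun u hu => funext fun i => ?_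
  simpa [antidiagBilinForm_apply, antidiagForm, Pi.single_apply] using hu (Pi.single i.rev 1)

/-- For every involution `b ∈ S_{2n+1}` there is an ordered basis
`v₁,…,v_{2n+1}` of `ℂ^{2n+1}` such that `γ(v_i, v_j) ≠ 0` iff `j = b(i)`, i.e.
the Gram matrix of `γ` in this basis is a monomial matrix with underlying
permutation `b`. -/
theorem stmt7 (n : ℕ) (b : Equiv.Perm (Fin (2 * n + 1))) (hb : b * b = 1) :
    ∃ v : Module.Basis (Fin (2 * n + 1)) ℂ (Fin (2 * n + 1) → ℂ),
      ∀ i j : Fin (2 * n + 1), antidiagForm n (v i) (v j) ≠ 0 ↔ j = b i := by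
  have hb' : Function.Involutive b := fun i => by
    rw [← Equiv.Perm.mul_apply, hb, Equiv.Perm.one_apply]
  exact (antidiagBilinForm n).exists_basis_apply_ne_zero_iff_eq_of_involutive
    (antidiagBilinForm_isSymm n) (antidiagBilinForm_nondegenerate n) (by simp) hb'
end

section
/- Define $P(x_1,\ldots,x_n, y_1,\ldots,y_{2n}) = \prod_{1 \le i < j \le n} (y_i + y_j)(y_i + y_{2n+1-j})$. Let $w \in S_{2n}$ act on the $y$-variables by $w \cdot y_i = y_{w(i)}$, followed by the substitution $\rho$ with $\rho(y_i) = X_i$ and $\rho(y_{2n+1-i}) = -X_i$ for $1 \le i \le n$. If $w$ is NOT a signed element of $S_{2n}$ (i.e., $w(2n+1-i) \ne 2n+1 - w(i)$ for some $i \le n$), then $\rho(w \cdot P) = 0$. -/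
open MvPolynomial

/-- Embed `Fin n` into `Fin (2n)` (position `i` of the first half). -/
def embHalf (n : ℕ) (a : Fin n) : Fin (2 * n) := ⟨a, by omega⟩

/-- The polynomial `P = ∏_{1 ≤ i < j ≤ n} (y_i + y_j)(y_i + y_{2n+1-j})` in the
variables `y_1,…,y_{2n}` (0-indexed: `y_{2n+1-j}` is the variable at `rev j`). -/
noncomputable def Ppoly (n : ℕ) : MvPolynomial (Fin (2 * n)) ℚ :=
  ∏ p ∈ (Finset.univ : Finset (Fin n × Fin n)).filter (fun p => p.1 < p.2),
    (X (embHalf n p.1) + X (embHalf n p.2)) *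
      (X (embHalf n p.1) + X ((embHalf n p.2).rev))

/-- The substitution `ρ` with `ρ(y_i) = X_i` and `ρ(y_{2n+1-i}) = -X_i`
for `1 ≤ i ≤ n`. -/
noncomputable def rhoSub (n : ℕ) :
    MvPolynomial (Fin (2 * n)) ℚ →ₐ[ℚ] MvPolynomial (Fin n) ℚ :=
  aeval (fun i : Fin (2 * n) =>
    if h : (i : ℕ) < n then X (⟨i, h⟩ : Fin n)
    else - X (⟨2 * n - 1 - (i : ℕ), by omega⟩ : Fin n))

lemma rho_add_rev (n : ℕ) (a : Fin (2*n)) : rhoSub n (X a + X a.rev) = 0 := by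
  have hrev : (a.rev : ℕ) = 2*n - 1 - (a:ℕ) := by
    rw [Fin.val_rev]; omega
  rw [rhoSub, map_add, aeval_X, aeval_X]
  by_cases h : (a:ℕ) < n
  · have h2 : ¬ ((a.rev:ℕ) < n) := by omega
    rw [dif_pos h, dif_neg h2]
    have : (⟨2*n - 1 - ((a.rev:ℕ)), by omega⟩ : Fin n) = ⟨a, h⟩ := by
      apply Fin.ext; simp; omega
    rw [this]; ring
  · have h2 : (a.rev:ℕ) < n := by omega
    rw [dif_neg h, dif_pos h2]
    have : (⟨2*n - 1 - ((a:ℕ)), by omega⟩ : Fin n) = ⟨(a.rev:ℕ), h2⟩ := by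
      apply Fin.ext; simp; omega
    rw [this]; ring

lemma inj_le_id {n : ℕ} (f : Fin n → Fin n) (hf : Function.Injective f)
    (hle : ∀ i, (f i : ℕ) ≤ (i : ℕ)) : ∀ i, f i = i := by
  suffices H : ∀ m : ℕ, ∀ i : Fin n, (i : ℕ) = m → f i = i by
    exact fun i => H i i rfl
  intro m
  induction m using Nat.strong_induction_on with
  | _ m IH =>
    intro i him
    rcases lt_or_eq_of_le (hle i) with hlt | heq
    · have h1 : f (f i) = f i := IH (f i) (by omega) (f i) rfl
      have := hf h1
      exact absurd (congrArg Fin.val this) (by omega)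
    · exact Fin.ext heq

lemma rev_ne_self {n : ℕ} (a : Fin (2*n)) : a.rev ≠ a := by
  intro h
  have := congrArg Fin.val h
  rw [Fin.val_rev] at this
  omega


/-- If `w ∈ S_{2n}` is *not* a signed element (i.e.
`w(2n+1-i) ≠ 2n+1-w(i)` for some `i ≤ n`), then `ρ(w · P) = 0`, where `w` acts on
`P` by permuting the `y`-variables. -/
theorem stmt9 (n : ℕ) (w : Equiv.Perm (Fin (2 * n)))
    (hw : ∃ i : Fin (2 * n), (i : ℕ) < n ∧ w i.rev ≠ (w i).rev) :
    rhoSub n (MvPolynomial.rename w (Ppoly n)) = 0 := by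
  obtain ⟨i0, hi0, hne⟩ := hw
  by_contra h
  -- each factor is nonzero
  have key : ∀ i j : Fin n, i < j →
      rhoSub n (X (w (embHalf n i)) + X (w (embHalf n j))) ≠ 0 ∧
      rhoSub n (X (w (embHalf n i)) + X (w ((embHalf n j).rev))) ≠ 0 := by
    intro i j hij
    have hmem : (i, j) ∈ (Finset.univ : Finset (Fin n × Fin n)).filter
        (fun p => p.1 < p.2) := by simp [hij]
    have hprod : rhoSub n (MvPolynomial.rename w (Ppoly n)) =
        ∏ p ∈ (Finset.univ : Finset (Fin n × Fin n)).filter (fun p => p.1 < p.2),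
          (rhoSub n (X (w (embHalf n p.1)) + X (w (embHalf n p.2))) *
            rhoSub n (X (w (embHalf n p.1)) + X (w ((embHalf n p.2).rev)))) := by
      rw [Ppoly, map_prod, map_prod]
      apply Finset.prod_congr rfl
      intro p _
      simp only [map_mul, map_add, rename_X]
    rw [hprod] at h
    constructor
    · intro h0
      exact h (Finset.prod_eq_zero hmem (by rw [h0, zero_mul]))
    · intro h0
      exact h (Finset.prod_eq_zero hmem (by rw [h0, mul_zero]))
  have h1 : ∀ i j : Fin n, i < j → w (embHalf n j) ≠ (w (embHalf n i)).rev := by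
    intro i j hij heq
    exact (key i j hij).1 (by rw [heq]; exact rho_add_rev n _)
  have h2 : ∀ i j : Fin n, i < j → w ((embHalf n j).rev) ≠ (w (embHalf n i)).rev := by
    intro i j hij heq
    exact (key i j hij).2 (by rw [heq]; exact rho_add_rev n _)
  set k : Fin n → Fin (2*n) := fun i => w.symm ((w (embHalf n i)).rev) with hk
  have hwk : ∀ i, w (k i) = (w (embHalf n i)).rev := fun i => w.apply_symm_apply _
  have claim1 : ∀ i : Fin n, ¬ ((k i : ℕ) < n) := by
    intro i hki
    set j : Fin n := ⟨k i, hki⟩ with hj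
    have hej : embHalf n j = k i := by apply Fin.ext; rfl
    have hji : j ≠ i := by
      intro hji
      have : w (embHalf n i) = (w (embHalf n i)).rev := by
        rw [← hwk i, ← hej, hji]
      exact rev_ne_self _ this.symm
    rcases lt_or_gt_of_ne hji with hlt | hgt
    · apply h1 j i hlt
      have hjw : w (embHalf n j) = (w (embHalf n i)).rev := by rw [hej, hwk]
      rw [hjw, Fin.rev_rev]
    · exact h1 i j hgt (by rw [hej, hwk])
  have claim2 : ∀ i : Fin n, ((k i).rev : ℕ) < n := by
    intro i
    have := claim1 i
    have hv : ((k i).rev : ℕ) = 2*n - 1 - (k i : ℕ) := by rw [Fin.val_rev]; omega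
    have := (k i).isLt
    omega
  set φ : Fin n → Fin n := fun i => ⟨(k i).rev, claim2 i⟩ with hφ
  have claim3 : ∀ i, (φ i : ℕ) ≤ (i : ℕ) := by
    intro i
    by_contra hgt
    push_neg at hgt
    have hij : i < φ i := hgt
    apply h2 i (φ i) hij
    have he : embHalf n (φ i) = (k i).rev := by apply Fin.ext; rfl
    rw [he, Fin.rev_rev, hwk]
  have hinj : Function.Injective φ := by
    intro a b hab
    have hv : ((k a).rev : ℕ) = ((k b).rev : ℕ) := by
      have := congrArg Fin.val hab
      simpa [hφ] using this
    have h1' : (k a).rev = (k b).rev := Fin.ext hv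
    have h2' : k a = k b := Fin.rev_injective h1'
    have h3' : (w (embHalf n a)).rev = (w (embHalf n b)).rev := w.symm.injective h2'
    have h4' : embHalf n a = embHalf n b := w.injective (Fin.rev_injective h3')
    have hv2 : (a:ℕ) = (b:ℕ) := by
      have := congrArg Fin.val h4'
      simpa [embHalf] using this
    exact Fin.ext hv2
  have hid := inj_le_id φ hinj claim3 ⟨i0, hi0⟩
  -- unravel
  have he0 : embHalf n ⟨i0, hi0⟩ = i0 := by apply Fin.ext; rfl
  have hval : ((k ⟨i0, hi0⟩).rev : ℕ) = (i0 : ℕ) := by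
    have := congrArg Fin.val hid
    simpa [hφ] using this
  have hrev0 : (k ⟨i0, hi0⟩).rev = i0 := Fin.ext hval
  have hk0 : k ⟨i0, hi0⟩ = i0.rev := by
    have := congrArg Fin.rev hrev0
    rwa [Fin.rev_rev] at this
  apply hne
  have := hwk ⟨i0, hi0⟩
  rw [hk0, he0] at this
  exact this
end

section
/- Define $P(x,y) = \prod_{1 \le i < j \le n} (y_i + y_j)(y_i + y_{2n+1-j})$ and let $w \in S_{2n}$ be a signed element corresponding to a signed permutation $\pi$ of $\{1,\ldots,n\}$. With the substitution $\rho(y_i) = X_i$, $\rho(y_{2n+1-i}) = -X_i$, one has $\rho(w \cdot P) = (-1)^{\ell(|\pi|)} \prod_{1 \le i < j \le n}(X_i + X_j)(X_i - X_j)$, where $\ell(|\pi|)$ is the inversion number of the underlying unsigned permutation. -/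
/-!
Since `w` commutes with `i ↦ rev i` and `ρ(y_{rev v}) = -ρ(y_v)`, each factor
`(y_a + y_b)(y_a + y_{rev b})` of `w · P` is sent to `ρ(y_{w a})² - ρ(y_{w b})²`, and
`ρ(y_{w a})² = X_{|π| a}²`. The resulting product of `X_{|π| a}² - X_{|π| b}²` over `a < b` is
antisymmetric in each pair, so reindexing it by `|π|` costs one sign per inversion of `|π|`.
-/

open MvPolynomial

/-- The inversion number (Coxeter length) of a permutation of `Fin n`. -/
def invCount {n : ℕ} (w : Equiv.Perm (Fin n)) : ℕ :=
  ((Finset.univ : Finset (Fin n × Fin n)).filter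
    (fun p => p.1 < p.2 ∧ w p.2 < w p.1)).card

section SortPair

variable {α : Type*} [LinearOrder α]

def sortPair (p : α × α) : α × α := if p.1 < p.2 then p else p.swap

lemma sortPair_eq_or_eq_swap (p : α × α) : sortPair p = p ∨ sortPair p = p.swap := by
  unfold sortPair
  split_ifs <;> simp

lemma sortPair_swap (p : α × α) : sortPair p.swap = sortPair p := by
  rcases lt_trichotomy p.1 p.2 with h | h | h
  · simp [sortPair, h, h.not_gt]
  · rw [show p.swap = p from Prod.ext h.symm h]
  · simp [sortPair, h, h.not_gt]

lemma sortPair_of_lt {p : α × α} (h : p.1 < p.2) : sortPair p = p := if_pos h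

lemma sortPair_fst_lt_snd {p : α × α} (h : p.1 ≠ p.2) : (sortPair p).1 < (sortPair p).2 := by
  unfold sortPair
  split_ifs with hlt
  · exact hlt
  · exact lt_of_le_of_ne (not_lt.mp hlt) h.symm

lemma sortPair_map_sortPair (f : α → α) (p : α × α) :
    sortPair (f (sortPair p).1, f (sortPair p).2) = sortPair (f p.1, f p.2) := by
  rcases sortPair_eq_or_eq_swap p with h | h
  · rw [h]
  · rw [h]
    exact sortPair_swap (f p.1, f p.2)

end SortPair

lemma prod_lt_comp_perm_of_antisymm {n : ℕ} {R : Type*} [CommMonoid R] [HasDistribNeg R]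
    (σ : Equiv.Perm (Fin n)) (F : Fin n → Fin n → R) (hF : ∀ a b, F b a = -F a b) :
    ∏ p ∈ (Finset.univ : Finset (Fin n × Fin n)).filter (fun p => p.1 < p.2),
        F (σ p.1) (σ p.2) =
      (-1 : R) ^ invCount σ *
        ∏ p ∈ (Finset.univ : Finset (Fin n × Fin n)).filter (fun p => p.1 < p.2), F p.1 p.2 := by
  set s := (Finset.univ : Finset (Fin n × Fin n)).filter (fun p => p.1 < p.2)
  have mem_s {p : Fin n × Fin n} : p ∈ s ↔ p.1 < p.2 := by simp [s]
  have sort_mem (τ : Equiv.Perm (Fin n)) {p} (hp : p ∈ s) : sortPair (τ p.1, τ p.2) ∈ s :=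
    mem_s.2 <| sortPair_fst_lt_snd <| τ.injective.ne (mem_s.1 hp).ne
  have sort_inv (τ : Equiv.Perm (Fin n)) {p} (hp : p ∈ s) :
      sortPair (τ⁻¹ (sortPair (τ p.1, τ p.2)).1, τ⁻¹ (sortPair (τ p.1, τ p.2)).2) = p := by
    rw [sortPair_map_sortPair]
    simpa using sortPair_of_lt (mem_s.1 hp)
  have sign_split : ∀ p ∈ s, F (σ p.1) (σ p.2) =
      (if σ p.2 < σ p.1 then -1 else 1) *
        F (sortPair (σ p.1, σ p.2)).1 (sortPair (σ p.1, σ p.2)).2 := by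
    intro p hp
    rcases lt_or_gt_of_ne (σ.injective.ne (mem_s.1 hp).ne) with h | h
    · simp [sortPair, h, h.not_gt]
    · simp only [sortPair, if_pos h, if_neg h.not_gt, Prod.fst_swap, Prod.snd_swap]
      rw [hF, neg_one_mul]
  rw [Finset.prod_congr rfl sign_split, Finset.prod_mul_distrib, Finset.prod_ite,
    Finset.prod_const, Finset.prod_const_one, mul_one, Finset.filter_filter]
  congr 1
  exact Finset.prod_nbij' (fun p => sortPair (σ p.1, σ p.2)) (fun p => sortPair (σ⁻¹ p.1, σ⁻¹ p.2))
    (fun _ hp => sort_mem σ hp) (fun _ hp => sort_mem σ⁻¹ hp)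
    (fun _ hp => sort_inv σ hp) (fun _ hp => by simpa using sort_inv σ⁻¹ hp) (fun _ _ => rfl)

lemma rhoSub_X_rev (n : ℕ) (v : Fin (2 * n)) : rhoSub n (X v.rev) = -rhoSub n (X v) := by
  have hrev : (v.rev : ℕ) = 2 * n - 1 - v := by rw [Fin.val_rev]; omega
  simp only [rhoSub, aeval_X]
  by_cases h : (v : ℕ) < n
  · rw [dif_pos h, dif_neg (by omega)]
    exact congrArg (-X ·) (Fin.ext (by simp only [hrev]; omega))
  · rw [dif_neg h, dif_pos (by omega), neg_neg]
    exact congrArg X (Fin.ext hrev)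

lemma rhoSub_X_sq_of_val_eq {n : ℕ} (v : Fin (2 * n)) (a : Fin n)
    (ha : (a : ℕ) = if (v : ℕ) < n then (v : ℕ) else 2 * n - 1 - v) :
    rhoSub n (X v) ^ 2 = X a ^ 2 := by
  simp only [rhoSub, aeval_X]
  split_ifs at ha ⊢ with h
  · congr 2
    exact Fin.ext ha.symm
  · rw [neg_sq]
    congr 2
    exact Fin.ext ha.symm

lemma rhoSub_rename_Ppoly (n : ℕ) (w : Equiv.Perm (Fin (2 * n)))
    (hw : ∀ i : Fin (2 * n), w i.rev = (w i).rev) :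
    rhoSub n (rename w (Ppoly n)) =
      ∏ p ∈ (Finset.univ : Finset (Fin n × Fin n)).filter (fun p => p.1 < p.2),
        (rhoSub n (X (w (embHalf n p.1))) ^ 2 - rhoSub n (X (w (embHalf n p.2))) ^ 2) := by
  simp only [Ppoly, map_prod, map_mul, map_add, rename_X, hw, rhoSub_X_rev]
  refine Finset.prod_congr rfl fun p _ => ?_
  ring

/-- If `w ∈ S_{2n}` is a signed element, corresponding to a signed
permutation `π` of `{1,…,n}` with underlying unsigned permutation `|π| = absw`,
then `ρ(w · P) = (-1)^{ℓ(|π|)} ∏_{1 ≤ i < j ≤ n} (X_i + X_j)(X_i - X_j)`. -/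
theorem stmt10 (n : ℕ) (w : Equiv.Perm (Fin (2 * n)))
    (hw : ∀ i : Fin (2 * n), w i.rev = (w i).rev)
    (absw : Equiv.Perm (Fin n))
    (habs : ∀ a : Fin n, (absw a : ℕ) =
      if ((w (embHalf n a)) : ℕ) < n then ((w (embHalf n a)) : ℕ)
      else 2 * n - 1 - ((w (embHalf n a)) : ℕ)) :
    rhoSub n (MvPolynomial.rename w (Ppoly n)) =
      (-1 : MvPolynomial (Fin n) ℚ) ^ invCount absw *
        ∏ p ∈ (Finset.univ : Finset (Fin n × Fin n)).filter (fun p => p.1 < p.2),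
          (X p.1 + X p.2) * (X p.1 - X p.2) := by
  simp only [rhoSub_rename_Ppoly n w hw, rhoSub_X_sq_of_val_eq _ _ (habs _)]
  rw [prod_lt_comp_perm_of_antisymm absw (fun a b => (X a : MvPolynomial (Fin n) ℚ) ^ 2 - X b ^ 2)
    fun _ _ => by ring]
  congr 1
  exact Finset.prod_congr rfl fun p _ => by ring
end

section
/- Let $n = p+q$. If $\sigma \in S_{2n}$ is the involution determined by a symmetric $(2p+1,2q-1)$-clan of length $2n$ (transpositions at positions of matching numbers, fixed points at signs), then the number of $i \in \{1,\ldots,n\}$ with $\sigma(i) > n$ is odd. -/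
lemma even_card_invol {α : Type*} [DecidableEq α] (s : Finset α) (f : α → α)
    (hmem : ∀ a ∈ s, f a ∈ s) (hinv : ∀ a ∈ s, f (f a) = a)
    (hne : ∀ a ∈ s, f a ≠ a) : Even s.card := by
  induction s using Finset.strongInduction with
  | _ s ih =>
    rcases s.eq_empty_or_nonempty with rfl | ⟨a, ha⟩
    · simp
    · have hfa := hmem a ha
      have hne' : f a ≠ a := hne a ha
      set t := s \ {a, f a} with ht
      have hsub : ({a, f a} : Finset α) ⊆ s := by
        intro x hx; simp at hx; rcases hx with rfl | rfl <;> assumption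
      have hcardt : t.card = s.card - 2 := by
        rw [ht, Finset.card_sdiff_of_subset hsub, Finset.card_pair (Ne.symm hne')]
      have hle : 2 ≤ s.card := by
        calc 2 = ({a, f a} : Finset α).card := (Finset.card_pair (Ne.symm hne')).symm
        _ ≤ s.card := Finset.card_le_card hsub
      have htss : t ⊂ s := by
        rw [ht]
        exact Finset.sdiff_ssubset hsub (by simp)
      have hts : ∀ x, x ∈ t ↔ x ∈ s ∧ x ≠ a ∧ x ≠ f a := by
        intro x; rw [ht]; simp [and_assoc]
      have heven : Even t.card := by
        apply ih t htss
        · intro x hx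
          rw [hts] at hx ⊢
          obtain ⟨hxs, hxa, hxfa⟩ := hx
          refine ⟨hmem x hxs, ?_, ?_⟩
          · intro h; apply hxfa
            have := hinv x hxs
            rw [h] at this; rw [← this]
          · intro h; apply hxa
            have hx2 := hinv x hxs
            have ha2 := hinv a ha
            rw [h] at hx2; rw [← hx2, ha2]
        · intro x hx; exact hinv x ((hts x).mp hx).1
        · intro x hx; exact hne x ((hts x).mp hx).1
      obtain ⟨k, hk⟩ := heven
      exact ⟨k + 1, by omega⟩

/-- A symmetric `(2p+1, 2q-1)`-clan of length `2n` (`n = p + q`,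
`q ≥ 1`) is modeled by its associated involution `τ ∈ S_{2n}` (transposing the
positions of each pair of matching numbers, fixing the positions of the signs)
together with a sign function `sgn` on the fixed points.  Symmetry means
`τ ∘ rev = rev ∘ τ` and that signs are preserved under reversal; the signature
condition means `#(+) + #pairs = 2p+1` and `#(-) + #pairs = 2q-1`.  Then the
number of `i ∈ {1,…,n}` with `τ(i) > n` is odd. -/
theorem stmt13 (p q : ℕ) (hq : 1 ≤ q) (τ : Equiv.Perm (Fin (2 * (p + q))))
    (sgn : Fin (2 * (p + q)) → Bool)
    (hτ : τ * τ = 1)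
    (hsym1 : ∀ j, τ j.rev = (τ j).rev)
    (hsym2 : ∀ j, τ j = j → sgn j.rev = sgn j)
    (mpairs : ℕ)
    (hm : 2 * mpairs =
      ((Finset.univ : Finset (Fin (2 * (p + q)))).filter (fun j => τ j ≠ j)).card)
    (hplus : ((Finset.univ : Finset (Fin (2 * (p + q)))).filter
        (fun j => τ j = j ∧ sgn j = true)).card + mpairs = 2 * p + 1)
    (hminus : ((Finset.univ : Finset (Fin (2 * (p + q)))).filter
        (fun j => τ j = j ∧ sgn j = false)).card + mpairs = 2 * q - 1) :
    Odd (((Finset.univ : Finset (Fin (2 * (p + q)))).filter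
      (fun i : Fin (2 * (p + q)) => (i : ℕ) < p + q ∧ p + q ≤ (τ i : ℕ))).card) := by
  have hτ2 : ∀ j, τ (τ j) = j := by
    intro j
    have := congrArg (fun σ : Equiv.Perm (Fin (2 * (p + q))) => σ j) hτ
    simpa using this
  have hrevne : ∀ j : Fin (2 * (p + q)), j.rev ≠ j := by
    intro j h
    have hv : (j.rev : ℕ) = (j : ℕ) := congrArg Fin.val h
    rw [Fin.val_rev] at hv
    have := j.isLt
    omega
  -- Step 1: mpairs is odd
  have hPeven : Even (((Finset.univ : Finset (Fin (2 * (p + q)))).filter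
      (fun j => τ j = j ∧ sgn j = true)).card) := by
    apply even_card_invol _ (fun j => j.rev)
    · intro a ha
      simp only [Finset.mem_filter, Finset.mem_univ, true_and] at ha ⊢
      obtain ⟨h1, h2⟩ := ha
      constructor
      · rw [hsym1, h1]
      · rw [hsym2 a h1, h2]
    · intro a _; exact a.rev_rev
    · intro a _; exact hrevne a
  have hmodd : Odd mpairs := by
    obtain ⟨k, hk⟩ := hPeven
    exact ⟨p - k, by omega⟩
  -- Step 2: the left nonfixed set has cardinality mpairs
  set N := ((Finset.univ : Finset (Fin (2 * (p + q)))).filter (fun j => τ j ≠ j)) with hN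
  set NL := N.filter (fun i : Fin (2 * (p + q)) => (i : ℕ) < p + q) with hNL
  set NR := N.filter (fun i : Fin (2 * (p + q)) => ¬ (i : ℕ) < p + q) with hNR
  have hsplit : NL.card + NR.card = N.card :=
    Finset.card_filter_add_card_filter_not _
  have hLR : NL.card = NR.card := by
    apply Finset.card_nbij' (fun i => i.rev) (fun i => i.rev)
    · intro a ha
      simp only [hNL, hNR, hN, Finset.mem_coe, Finset.mem_filter, Finset.mem_univ, true_and] at ha ⊢
      obtain ⟨h1, h2⟩ := ha
      have hval : (a.rev : ℕ) = 2 * (p + q) - 1 - (a : ℕ) := by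
        rw [Fin.val_rev]; omega
      constructor
      · intro h; apply h1
        have h' : (τ a).rev = a.rev := by rw [← hsym1, h]
        have := congrArg Fin.rev h'
        rwa [Fin.rev_rev, Fin.rev_rev] at this
      · have := a.isLt; omega
    · intro a ha
      simp only [hNL, hNR, hN, Finset.mem_coe, Finset.mem_filter, Finset.mem_univ, true_and] at ha ⊢
      obtain ⟨h1, h2⟩ := ha
      have hval : (a.rev : ℕ) = 2 * (p + q) - 1 - (a : ℕ) := by
        rw [Fin.val_rev]; omega
      constructor
      · intro h; apply h1
        have h' : (τ a).rev = a.rev := by rw [← hsym1, h]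
        have := congrArg Fin.rev h'
        rwa [Fin.rev_rev, Fin.rev_rev] at this
      · have := a.isLt; omega
    · intro a _; exact a.rev_rev
    · intro a _; exact a.rev_rev
  have hNLcard : NL.card = mpairs := by omega
  -- Step 3: NL splits into A and B
  set A := ((Finset.univ : Finset (Fin (2 * (p + q)))).filter
      (fun i : Fin (2 * (p + q)) => (i : ℕ) < p + q ∧ p + q ≤ (τ i : ℕ))) with hA
  set B := NL.filter (fun i : Fin (2 * (p + q)) => ¬ p + q ≤ (τ i : ℕ)) with hB
  have hAB : A.card + B.card = NL.card := by
    have hfil : NL.filter (fun i : Fin (2 * (p + q)) => p + q ≤ (τ i : ℕ)) = A := by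
      ext x
      simp only [hA, hNL, hN, Finset.mem_filter, Finset.mem_univ, true_and]
      constructor
      · rintro ⟨⟨_, h2⟩, h3⟩; exact ⟨h2, h3⟩
      · rintro ⟨h1, h2⟩
        refine ⟨⟨?_, h1⟩, h2⟩
        intro h
        have := congrArg Fin.val h
        omega
    rw [← hfil, hB]
    exact Finset.card_filter_add_card_filter_not _
  -- Step 4: B has even cardinality
  have hBeven : Even B.card := by
    apply even_card_invol _ (fun i => τ i)
    · intro a ha
      simp only [hB, hNL, hN, Finset.mem_filter, Finset.mem_univ, true_and] at ha ⊢
      obtain ⟨⟨h1, h2⟩, h3⟩ := ha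
      refine ⟨⟨?_, ?_⟩, ?_⟩
      · intro h
        apply h1
        rw [hτ2] at h
        exact h.symm
      · omega
      · rw [hτ2]; omega
    · intro a _; exact hτ2 a
    · intro a ha
      simp only [hB, hNL, hN, Finset.mem_filter, Finset.mem_univ, true_and] at ha
      exact ha.1.1
  -- conclude
  obtain ⟨k, hk⟩ := hmodd
  obtain ⟨l, hl⟩ := hBeven
  exact ⟨k - l, by omega⟩
end

section
/- Fix $n$ and an involution $\sigma \in S_{2n+1}$ satisfying $\sigma(2n+2-i) = 2n+2-\sigma(i)$ for all $i$. Let $k = \#\{i \in \{1,\ldots,n\} : \sigma(i) = i\}$. Then the number of symmetric $(2p,2q+1)$-clans of length $2n+1$ (over all $p + q = n$, $p, q \ge 0$) whose associated involution is $\sigma$ equals $2^k$. -/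
namespace Stmt16

def mid (n : ℕ) : Fin (2*n+1) := ⟨n, by omega⟩

lemma rev_val {n : ℕ} (j : Fin (2*n+1)) : (j.rev : ℕ) = 2*n - j := by
  simp [Fin.val_rev]

lemma mid_rev {n : ℕ} : (mid n).rev = mid n := by
  ext; simp [rev_val, mid]; omega

lemma rev_lt {n : ℕ} {j : Fin (2*n+1)} (h : n < (j:ℕ)) : ((j.rev : Fin (2*n+1)) : ℕ) < n := by
  have := j.isLt; rw [rev_val]; omega

lemma lt_rev {n : ℕ} {j : Fin (2*n+1)} (h : (j:ℕ) < n) : n < ((j.rev : Fin (2*n+1)) : ℕ) := by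
  have := j.isLt; rw [rev_val]; omega

variable {n : ℕ} {σ : Equiv.Perm (Fin (2*n+1))}

lemma fixed_rev (hsigned : ∀ i : Fin (2*n+1), σ i.rev = (σ i).rev)
    {j : Fin (2*n+1)} (h : σ j = j) : σ j.rev = j.rev := by
  rw [hsigned, h]

lemma mid_fixed (hsigned : ∀ i : Fin (2*n+1), σ i.rev = (σ i).rev) : σ (mid n) = mid n := by
  have h := hsigned (mid n)
  rw [mid_rev] at h
  have hv : ((σ (mid n)) : ℕ) = 2*n - (σ (mid n) : ℕ) := by
    conv_lhs => rw [h]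
    exact rev_val _
  have := (σ (mid n)).isLt
  ext
  show (σ (mid n) : ℕ) = n
  omega

lemma card_symm (T : Finset (Fin (2*n+1))) (hT : ∀ j ∈ T, j.rev ∈ T) :
    T.card = 2 * (T.filter (fun j : Fin (2*n+1) => (j:ℕ) < n)).card
      + (if mid n ∈ T then 1 else 0) := by
  classical
  have hsplit := Finset.card_filter_add_card_filter_not
    (s := T) (p := fun j : Fin (2*n+1) => (j:ℕ) < n)
  have h1 : T.filter (fun j : Fin (2*n+1) => ¬ (j:ℕ) < n)
      = T.filter (fun j : Fin (2*n+1) => (j:ℕ) = n)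
        ∪ T.filter (fun j : Fin (2*n+1) => n < (j:ℕ)) := by
    rw [← Finset.filter_or]
    exact Finset.filter_congr (fun j _ => by constructor <;> intro h <;> omega)
  have hdisj : Disjoint (T.filter (fun j : Fin (2*n+1) => (j:ℕ) = n))
      (T.filter (fun j : Fin (2*n+1) => n < (j:ℕ))) := by
    rw [Finset.disjoint_left]
    intro j hj hj'
    simp only [Finset.mem_filter] at hj hj'
    omega
  have hM : T.filter (fun j : Fin (2*n+1) => (j:ℕ) = n)
      = if mid n ∈ T then {mid n} else ∅ := by
    split_ifs with h
    · ext j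
      simp only [Finset.mem_filter, Finset.mem_singleton]
      constructor
      · rintro ⟨hjT, hj⟩; exact Fin.ext hj
      · rintro rfl; exact ⟨h, rfl⟩
    · ext j
      simp only [Finset.mem_filter, Finset.notMem_empty, iff_false, not_and]
      intro hjT hj
      exact h ((Fin.ext hj : j = mid n) ▸ hjT)
  have hMcard : (T.filter (fun j : Fin (2*n+1) => (j:ℕ) = n)).card
      = (if mid n ∈ T then 1 else 0) := by
    rw [hM]; split_ifs <;> simp
  have hRL : (T.filter (fun j : Fin (2*n+1) => n < (j:ℕ))).card
      = (T.filter (fun j : Fin (2*n+1) => (j:ℕ) < n)).card := by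
    refine Finset.card_bij' (fun j _ => j.rev) (fun j _ => j.rev) ?_ ?_
      (fun a _ => Fin.rev_rev a) (fun a _ => Fin.rev_rev a)
    · intro a ha
      simp only [Finset.mem_filter] at ha ⊢
      exact ⟨hT _ ha.1, rev_lt ha.2⟩
    · intro a ha
      simp only [Finset.mem_filter] at ha ⊢
      exact ⟨hT _ ha.1, lt_rev ha.2⟩
  rw [h1, Finset.card_union_of_disjoint hdisj, hMcard, hRL] at hsplit
  omega

def Sset (n : ℕ) (σ : Equiv.Perm (Fin (2*n+1))) : Finset (Fin (2*n+1)) :=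
  Finset.univ.filter (fun i : Fin (2*n+1) => (i:ℕ) < n ∧ σ i = i)

lemma mem_Sset {i : Fin (2*n+1)} : i ∈ Sset n σ ↔ (i:ℕ) < n ∧ σ i = i := by
  simp [Sset]

lemma cardF (hsigned : ∀ i : Fin (2*n+1), σ i.rev = (σ i).rev) :
    (Finset.univ.filter (fun j : Fin (2*n+1) => σ j = j)).card = 2 * (Sset n σ).card + 1 := by
  have hT : ∀ j ∈ Finset.univ.filter (fun j : Fin (2*n+1) => σ j = j),
      j.rev ∈ Finset.univ.filter (fun j : Fin (2*n+1) => σ j = j) := by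
    intro j hj
    simp only [Finset.mem_filter, Finset.mem_univ, true_and] at hj ⊢
    exact fixed_rev hsigned hj
  have h := card_symm _ hT
  have hmem : mid n ∈ Finset.univ.filter (fun j : Fin (2*n+1) => σ j = j) := by
    simp only [Finset.mem_filter, Finset.mem_univ, true_and]
    exact mid_fixed hsigned
  rw [if_pos hmem] at h
  have hfe : (Finset.univ.filter (fun j : Fin (2*n+1) => σ j = j)).filter
      (fun j : Fin (2*n+1) => (j:ℕ) < n) = Sset n σ := by
    rw [Finset.filter_filter]
    exact Finset.filter_congr (fun j _ => by tauto)
  rw [hfe] at h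
  omega

lemma cardT (hsigned : ∀ i : Fin (2*n+1), σ i.rev = (σ i).rev)
    (sgn : Fin (2*n+1) → Bool) (b : Bool)
    (P2 : ∀ j, σ j = j → sgn j.rev = sgn j) :
    ∃ c ≤ (Sset n σ).card,
      (Finset.univ.filter (fun j : Fin (2*n+1) => σ j = j ∧ sgn j = b)).card
        = 2*c + (if sgn (mid n) = b then 1 else 0) := by
  classical
  set T := Finset.univ.filter (fun j : Fin (2*n+1) => σ j = j ∧ sgn j = b) with hTdef
  have hT : ∀ j ∈ T, j.rev ∈ T := by
    intro j hj
    simp only [hTdef, Finset.mem_filter, Finset.mem_univ, true_and] at hj ⊢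
    exact ⟨fixed_rev hsigned hj.1, by rw [P2 j hj.1]; exact hj.2⟩
  have h := card_symm T hT
  have hmem : mid n ∈ T ↔ sgn (mid n) = b := by
    simp only [hTdef, Finset.mem_filter, Finset.mem_univ, true_and]
    exact and_iff_right (mid_fixed hsigned)
  refine ⟨(T.filter (fun j : Fin (2*n+1) => (j:ℕ) < n)).card, ?_, ?_⟩
  · apply Finset.card_le_card
    intro j hj
    simp only [hTdef, Finset.mem_filter, Finset.mem_univ, true_and] at hj
    exact mem_Sset.mpr ⟨hj.2, hj.1.1⟩
  · rw [h]
    congr 1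
    by_cases hs : sgn (mid n) = b
    · rw [if_pos (hmem.mpr hs), if_pos hs]
    · rw [if_neg (fun hc => hs (hmem.mp hc)), if_neg hs]

lemma cardTF (sgn : Fin (2*n+1) → Bool) :
    (Finset.univ.filter (fun j : Fin (2*n+1) => σ j = j ∧ sgn j = true)).card
      + (Finset.univ.filter (fun j : Fin (2*n+1) => σ j = j ∧ sgn j = false)).card
      = (Finset.univ.filter (fun j : Fin (2*n+1) => σ j = j)).card := by
  classical
  have h := Finset.card_filter_add_card_filter_not
    (s := Finset.univ.filter (fun j : Fin (2*n+1) => σ j = j))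
    (p := fun j : Fin (2*n+1) => sgn j = true)
  rw [Finset.filter_filter, Finset.filter_filter] at h
  simp only [Bool.not_eq_true] at h
  exact h

lemma cardNF (hsigned : ∀ i : Fin (2*n+1), σ i.rev = (σ i).rev) :
    (Finset.univ.filter (fun j : Fin (2*n+1) => σ j ≠ j)).card
      = 2 * (n - (Sset n σ).card) ∧ (Sset n σ).card ≤ n := by
  classical
  have h := Finset.card_filter_add_card_filter_not
    (s := (Finset.univ : Finset (Fin (2*n+1)))) (p := fun j : Fin (2*n+1) => σ j = j)
  have hu : (Finset.univ : Finset (Fin (2*n+1))).card = 2*n+1 := by simp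
  have hF := cardF hsigned
  have hne : (Finset.univ.filter (fun j : Fin (2*n+1) => σ j ≠ j)).card
      = (Finset.univ.filter (fun j : Fin (2*n+1) => ¬ σ j = j)).card := rfl
  rw [hne]
  omega


def back (n : ℕ) (σ : Equiv.Perm (Fin (2*n+1)))
    (hsigned : ∀ i : Fin (2*n+1), σ i.rev = (σ i).rev)
    (a : Bool) (f : ↥(Sset n σ) → Bool) (j : Fin (2*n+1)) : Bool :=
  if hj : σ j = j then
    if hl : (j:ℕ) < n then f ⟨j, mem_Sset.mpr ⟨hl, hj⟩⟩
    else if hr : n < (j:ℕ) then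
      f ⟨j.rev, mem_Sset.mpr ⟨rev_lt hr, fixed_rev hsigned hj⟩⟩
    else a
  else false

variable (hsigned : ∀ i : Fin (2*n+1), σ i.rev = (σ i).rev) (a : Bool) (f : ↥(Sset n σ) → Bool)

lemma back_nonfixed {j : Fin (2*n+1)} (hj : ¬ σ j = j) :
    back n σ hsigned a f j = false := dif_neg hj

lemma back_left {j : Fin (2*n+1)} (hj : σ j = j) (hl : (j:ℕ) < n) :
    back n σ hsigned a f j = f ⟨j, mem_Sset.mpr ⟨hl, hj⟩⟩ := by
  unfold back
  rw [dif_pos hj, dif_pos hl]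

lemma back_right {j : Fin (2*n+1)} (hj : σ j = j) (hr : n < (j:ℕ)) :
    back n σ hsigned a f j
      = f ⟨j.rev, mem_Sset.mpr ⟨rev_lt hr, fixed_rev hsigned hj⟩⟩ := by
  unfold back
  rw [dif_pos hj, dif_neg (by omega), dif_pos hr]

lemma back_mid : back n σ hsigned a f (mid n) = a := by
  unfold back
  rw [dif_pos (mid_fixed hsigned), dif_neg (by simp [mid]), dif_neg (by simp [mid])]

lemma back_symm {j : Fin (2*n+1)} (hj : σ j = j) :
    back n σ hsigned a f j.rev = back n σ hsigned a f j := by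
  rcases lt_trichotomy ((j:ℕ)) n with hl | he | hr
  · rw [back_left hsigned a f hj hl,
      back_right hsigned a f (fixed_rev hsigned hj) (lt_rev hl)]
    exact congrArg f (Subtype.ext (Fin.rev_rev j))
  · have hm : j = mid n := Fin.ext he
    rw [hm, mid_rev]
  · rw [back_right hsigned a f hj hr,
      back_left hsigned a f (fixed_rev hsigned hj) (rev_lt hr)]


lemma mid_val (hsigned : ∀ i : Fin (2*n+1), σ i.rev = (σ i).rev) (sgn : Fin (2*n+1) → Bool)
    (P2 : ∀ j, σ j = j → sgn j.rev = sgn j)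
    (P3 : ∃ p q mpairs : ℕ, p + q = n ∧
      2 * mpairs = ((Finset.univ : Finset (Fin (2*n+1))).filter (fun j => σ j ≠ j)).card ∧
      ((Finset.univ : Finset (Fin (2*n+1))).filter (fun j => σ j = j ∧ sgn j = true)).card
        + mpairs = 2 * p ∧
      ((Finset.univ : Finset (Fin (2*n+1))).filter (fun j => σ j = j ∧ sgn j = false)).card
        + mpairs = 2 * q + 1) :
    sgn (mid n) = decide ((n - (Sset n σ).card) % 2 = 1) := by
  obtain ⟨p, q, mp, hpq, hmp, h1, h2⟩ := P3
  obtain ⟨c, hc, ht⟩ := cardT hsigned sgn true P2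
  obtain ⟨hNF, hk⟩ := cardNF hsigned
  rw [hNF] at hmp
  rw [ht] at h1
  cases hs : sgn (mid n) with
  | false =>
    rw [hs] at h1
    simp only [Bool.false_eq_true, if_false] at h1
    symm
    rw [decide_eq_false_iff_not]
    omega
  | true =>
    rw [hs] at h1
    simp only [if_true] at h1
    symm
    rw [decide_eq_true_eq]
    omega

lemma back_mem :
    (∀ j, σ j ≠ j →
      back n σ hsigned (decide ((n - (Sset n σ).card) % 2 = 1)) f j = false) ∧
    (∀ j, σ j = j →
      back n σ hsigned (decide ((n - (Sset n σ).card) % 2 = 1)) f j.rev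
        = back n σ hsigned (decide ((n - (Sset n σ).card) % 2 = 1)) f j) ∧
    (∃ p q mpairs : ℕ, p + q = n ∧
      2 * mpairs = ((Finset.univ : Finset (Fin (2*n+1))).filter (fun j => σ j ≠ j)).card ∧
      ((Finset.univ : Finset (Fin (2*n+1))).filter (fun j => σ j = j ∧
        back n σ hsigned (decide ((n - (Sset n σ).card) % 2 = 1)) f j = true)).card
        + mpairs = 2 * p ∧
      ((Finset.univ : Finset (Fin (2*n+1))).filter (fun j => σ j = j ∧
        back n σ hsigned (decide ((n - (Sset n σ).card) % 2 = 1)) f j = false)).card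
        + mpairs = 2 * q + 1) := by
  set a := decide ((n - (Sset n σ).card) % 2 = 1) with ha
  refine ⟨fun j hj => back_nonfixed hsigned a f hj,
    fun j hj => back_symm hsigned a f hj, ?_⟩
  obtain ⟨c, hc, ht⟩ := cardT hsigned (back n σ hsigned a f) true
    (fun j hj => back_symm hsigned a f hj)
  obtain ⟨hNF, hk⟩ := cardNF hsigned
  have hF := cardF hsigned
  have hTF := cardTF (σ := σ) (back n σ hsigned a f)
  rw [back_mid hsigned a f] at ht
  set k := (Sset n σ).card with hkdef
  have hA : (if a = true then 1 else 0) = (n - k) % 2 := by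
    rcases Nat.mod_two_eq_zero_or_one (n - k) with h | h
    · have : a = false := by simp [ha, ← hkdef, h]
      rw [this]; simp [h]
    · have : a = true := by simp [ha, ← hkdef, h]
      rw [this]; simp [h]
  refine ⟨c + ((n - k) + (n - k) % 2)/2, n - (c + ((n - k) + (n - k) % 2)/2), n - k,
    ?_, ?_, ?_, ?_⟩
  · omega
  · omega
  · omega
  · omega


lemma back_of (hsigned : ∀ i : Fin (2*n+1), σ i.rev = (σ i).rev)
    (sgn : Fin (2*n+1) → Bool)
    (P1 : ∀ j, σ j ≠ j → sgn j = false)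
    (P2 : ∀ j, σ j = j → sgn j.rev = sgn j)
    (P3 : ∃ p q mpairs : ℕ, p + q = n ∧
      2 * mpairs = ((Finset.univ : Finset (Fin (2*n+1))).filter (fun j => σ j ≠ j)).card ∧
      ((Finset.univ : Finset (Fin (2*n+1))).filter (fun j => σ j = j ∧ sgn j = true)).card
        + mpairs = 2 * p ∧
      ((Finset.univ : Finset (Fin (2*n+1))).filter (fun j => σ j = j ∧ sgn j = false)).card
        + mpairs = 2 * q + 1) :
    ∀ j, back n σ hsigned (decide ((n - (Sset n σ).card) % 2 = 1))
      (fun i => sgn i.1) j = sgn j := by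
  intro j
  by_cases hj : σ j = j
  · rcases lt_trichotomy ((j:ℕ)) n with hl | he | hr
    · rw [back_left hsigned _ _ hj hl]
    · have hm : j = mid n := Fin.ext he
      rw [hm, back_mid hsigned]
      exact (mid_val hsigned sgn P2 P3).symm
    · rw [back_right hsigned _ _ hj hr]
      exact P2 j hj
  · rw [back_nonfixed hsigned _ _ hj]
    exact (P1 j hj).symm

end Stmt16



/-- Fix `n` and an involution `σ ∈ S_{2n+1}` which is a signed
element (`σ(2n+2-i) = 2n+2-σ(i)`, i.e. `σ ∘ rev = rev ∘ σ`).  A symmetric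
`(2p,2q+1)`-clan with associated involution `σ` is determined by its sign
function `sgn` on the fixed points of `σ` (normalized to `false` elsewhere),
subject to the symmetry condition on signs and the signature condition
`#(+) + #pairs = 2p`, `#(-) + #pairs = 2q+1` for some `p + q = n`.  Let
`k = #{i ∈ {1,…,n} : σ(i) = i}`.  Then the number of such clans, over all
decompositions `p + q = n`, equals `2^k`. -/
theorem stmt16 (n : ℕ) (σ : Equiv.Perm (Fin (2 * n + 1)))
    (hinv : σ * σ = 1)
    (hsigned : ∀ i : Fin (2 * n + 1), σ i.rev = (σ i).rev) :
    Nat.card {sgn : Fin (2 * n + 1) → Bool //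
        (∀ j, σ j ≠ j → sgn j = false) ∧
        (∀ j, σ j = j → sgn j.rev = sgn j) ∧
        (∃ p q mpairs : ℕ, p + q = n ∧
          2 * mpairs =
            ((Finset.univ : Finset (Fin (2 * n + 1))).filter
              (fun j => σ j ≠ j)).card ∧
          ((Finset.univ : Finset (Fin (2 * n + 1))).filter
              (fun j => σ j = j ∧ sgn j = true)).card + mpairs = 2 * p ∧
          ((Finset.univ : Finset (Fin (2 * n + 1))).filter
              (fun j => σ j = j ∧ sgn j = false)).card + mpairs = 2 * q + 1)} =
      2 ^ (((Finset.univ : Finset (Fin (2 * n + 1))).filter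
        (fun i : Fin (2 * n + 1) => (i : ℕ) < n ∧ σ i = i)).card) := by
  classical
  have e : {sgn : Fin (2 * n + 1) → Bool //
        (∀ j, σ j ≠ j → sgn j = false) ∧
        (∀ j, σ j = j → sgn j.rev = sgn j) ∧
        (∃ p q mpairs : ℕ, p + q = n ∧
          2 * mpairs =
            ((Finset.univ : Finset (Fin (2 * n + 1))).filter
              (fun j => σ j ≠ j)).card ∧
          ((Finset.univ : Finset (Fin (2 * n + 1))).filter
              (fun j => σ j = j ∧ sgn j = true)).card + mpairs = 2 * p ∧
          ((Finset.univ : Finset (Fin (2 * n + 1))).filter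
              (fun j => σ j = j ∧ sgn j = false)).card + mpairs = 2 * q + 1)}
      ≃ (↥(Stmt16.Sset n σ) → Bool) :=
  { toFun := fun s i => s.1 i.1
    invFun := fun f =>
      ⟨Stmt16.back n σ hsigned (decide ((n - (Stmt16.Sset n σ).card) % 2 = 1)) f,
        Stmt16.back_mem hsigned f⟩
    left_inv := fun s =>
      Subtype.ext (funext (Stmt16.back_of hsigned s.1 s.2.1 s.2.2.1 s.2.2.2))
    right_inv := fun f => funext fun i => by
      have hi := Stmt16.mem_Sset.mp i.2
      show Stmt16.back n σ hsigned
        (decide ((n - (Stmt16.Sset n σ).card) % 2 = 1)) f i.1 = f i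
      rw [Stmt16.back_left hsigned _ _ hi.2 hi.1] }
  rw [Nat.card_congr e, Nat.card_eq_fintype_card, Fintype.card_fun,
    Fintype.card_coe, Fintype.card_bool]
  rfl
end
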